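/- arXiv:math/0210115 — 3 statements merged into one kernel-verified Lean document; each statement's English description precedes it below -/
import Mathlib

section
/- The path fibration π : PX → X × X, sending a continuous path γ : [0,1] → X to its endpoint pair (γ(0), γ(1)), admits a continuous global section if and only if X is contractible (for X a path-connected CW complex / nice space). -/
/-- The space of continuous paths `[0,1] → X`, with the compact-open topology. -/
abbrev PathSpace (X : Type*) [TopologicalSpace X] := C(unitInterval, X)

/-- for a path-connected space `X`, the path fibration
`π : PX → X × X`, `γ ↦ (γ 0, γ 1)`, admits a continuous global section
if and only if `X` is contractible. -/
theorem pathFibration_section_iff_contractible (X : Type*) [TopologicalSpace X]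
    [PathConnectedSpace X] :
    (∃ s : C(X × X, PathSpace X), ∀ p : X × X, s p 0 = p.1 ∧ s p 1 = p.2) ↔
      ContractibleSpace X := by
  obtain ⟨x0⟩ : Nonempty X := inferInstance
  constructor
  · rintro ⟨s, hs⟩
    rw [contractible_iff_id_nullhomotopic]
    refine ⟨x0, ⟨⟨⟨fun q => s (q.2, x0) q.1, ?_⟩, ?_, ?_⟩⟩⟩
    · exact (ContinuousEval.continuous_eval.comp
        ((s.continuous.comp (continuous_snd.prodMk continuous_const)).prodMk
          continuous_fst))
    · intro x; exact (hs (x, x0)).1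
    · intro x; exact (hs (x, x0)).2
  · intro hX
    obtain ⟨y0, ⟨H⟩⟩ := (contractible_iff_id_nullhomotopic X).1 hX
    -- path from x to y0 coming from the homotopy
    let P : ∀ x : X, Path x y0 := fun x => (H.evalAt x).cast rfl rfl
    have hP : Continuous ↿P := by
      have : ↿P = fun q : X × unitInterval => H (q.2, q.1) := rfl
      rw [this]
      exact H.continuous.comp (continuous_snd.prodMk continuous_fst)
    let Q : ∀ p : X × X, Path p.1 p.2 := fun p => (P p.1).trans (P p.2).symm
    have hQ : Continuous ↿Q :=
      Path.trans_continuous_family (fun p : X × X => P p.1)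
        (hP.comp ((continuous_fst.comp continuous_fst).prodMk continuous_snd))
        (fun p : X × X => (P p.2).symm)
        (Path.symm_continuous_family (fun p : X × X => P p.2)
          (hP.comp ((continuous_snd.comp continuous_fst).prodMk continuous_snd)))
    refine ⟨(ContinuousMap.mk ↿Q hQ).curry, fun p => ⟨?_, ?_⟩⟩
    · exact (Q p).source
    · exact (Q p).target
end

section
/- In the Orlik–Solomon algebra of a simple matroid with a fixed linear order on the ground set S, for any independent set T ⊆ S taken in the induced order, m(T) = Σ_{σ ∈ Σ_p} sgn(σ) · m(ℱ(σT)), where the sum runs over all permutations σ of T, ℱ(σT) is the flag of flats generated by the reordered tuple σT, and m(F) denotes the unique nbc-monomial associated to a flag F (or 0 if the flag is not standard). -/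
open scoped Classical

noncomputable section OrlikSolomon

variable (K : Type*) [Field K]

/-- The generator `e_s` of the exterior algebra on the free module with basis `S`. -/
def extGen {α : Type*} (s : α) : ExteriorAlgebra K (α →₀ K) :=
  ExteriorAlgebra.ι K (Finsupp.single s 1)

/-- The degree `-1` differential `∂` of the exterior algebra (the graded derivation
with `∂ e_s = 1`), realized as contraction with the linear functional sending each
basis vector to `1`. -/
def extBoundary (α : Type*) : ExteriorAlgebra K (α →₀ K) →ₗ[K] ExteriorAlgebra K (α →₀ K) :=
  CliffordAlgebra.contractLeft (Finsupp.linearCombination K fun _ : α => (1 : K))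

/-- The relations of the Orlik–Solomon algebra of the matroid `Mat`: all elements
`∂(e_{s₁} ∧ ⋯ ∧ e_{s_p})` for dependent subsets `{s₁, …, s_p}` are set to zero. -/
def osRel {α : Type*} (Mat : Matroid α) :
    ExteriorAlgebra K (α →₀ K) → ExteriorAlgebra K (α →₀ K) → Prop :=
  fun x y => y = 0 ∧ ∃ (p : ℕ) (f : Fin p → α), Function.Injective f ∧
    ¬ Mat.Indep (Set.range f) ∧
    x = extBoundary K α (List.ofFn fun i => extGen K (f i)).prod

/-- The Orlik–Solomon algebra of the matroid `Mat` over `K`. -/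
abbrev OSAlgebra {α : Type*} (Mat : Matroid α) := RingQuot (osRel K Mat)

/-- The generator `e_s` of the Orlik–Solomon algebra. -/
def osE {α : Type*} (Mat : Matroid α) (s : α) : OSAlgebra K Mat :=
  RingQuot.mkRingHom (osRel K Mat) (extGen K s)

/-- The ordered monomial `m(T) = e_{t₁} ⋯ e_{t_p}` associated to a tuple `T`. -/
def osMonomial {α : Type*} (Mat : Matroid α) {p : ℕ} (T : Fin p → α) : OSAlgebra K Mat :=
  (List.ofFn fun i => osE K Mat (T i)).prod

end OrlikSolomon

noncomputable section

variable (K : Type*) [Field K]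
variable {α : Type*} [Fintype α] [LinearOrder α]

/-- `C` is a circuit of the matroid `Mat`: a minimal dependent set. -/
def IsCircuitSet (Mat : Matroid α) (C : Set α) : Prop :=
  ¬ Mat.Indep C ∧ ∀ D ⊂ C, Mat.Indep D

/-- `C` is a broken circuit: it is obtained from a circuit by deleting its least
element (equivalently, there is `a ∉ C` smaller than all elements of `C` with
`C ∪ {a}` a circuit). -/
def IsBrokenCircuit (Mat : Matroid α) (C : Set α) : Prop :=
  ∃ a : α, a ∉ C ∧ (∀ b ∈ C, a < b) ∧ IsCircuitSet Mat (insert a C)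

/-- A set is `nbc` if it contains no broken circuit. -/
def IsNBC (Mat : Matroid α) (T : Set α) : Prop :=
  ∀ C ⊆ T, ¬ IsBrokenCircuit Mat C

/-- The canonical tuple of the flag `ℱ(g)` generated by a tuple `g = (t₁, …, t_p)`:
its `k`-th entry is the least element of `⟨g_k, …, g_p⟩ ∖ ⟨g_{k+1}, …, g_p⟩`
(the successive difference of the flag of flats). -/
def flagTuple (Mat : Matroid α) {p : ℕ} (g : Fin p → α) : Fin p → α := fun i =>
  let S : Set α := Mat.closure (g '' {j | i ≤ j}) \ Mat.closure (g '' {j | i < j})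
  if h : (Set.toFinite S).toFinset.Nonempty then (Set.toFinite S).toFinset.min' h
  else g i

/-- The `nbc`-monomial `m(F)` of the flag `F = ℱ(g)`: the monomial of the canonical
tuple of the flag, provided this tuple is increasing and its underlying set is
`nbc` (i.e. the flag is standard); otherwise `0`. -/
def flagMonomial (Mat : Matroid α) {p : ℕ} (g : Fin p → α) : OSAlgebra K Mat :=
  if StrictMono (flagTuple Mat g) ∧ IsNBC Mat (Set.range (flagTuple Mat g)) then
    osMonomial K Mat (flagTuple Mat g)
  else 0

/-!
Prove more generally, by induction on `p`, that for every upper set `U` of `S` the sum restricted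
to the flags whose nbc-tuple lies in `U` equals `m(T)` if the flat `⟨T⟩` lies in `U` and `0`
otherwise. Write a permutation as `σ = (k, τ)` with `σ 0 = k`. The nbc-tuple of `ℱ(σT)` starts
with the least element `a_k` of `⟨T⟩ ∖ ⟨T ∖ t_k⟩` and continues with that of `ℱ(τ(T ∖ t_k))`,
which must lie above `a_k`; so the induction hypothesis for `U = (a_k, ∞)` evaluates the sum over
`τ`. Let `m₀` be the least element of `⟨T⟩`. If `m₀ ∈ ⟨T ∖ t_k⟩`, the `k`-th term vanishes, and
so does `e_{m₀} m(T ∖ t_k)`; otherwise `a_k = m₀`. Either way the `k`-th term is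
`(-1)^k e_{m₀} m(T ∖ t_k)`, and these add up to `e_{m₀} ∂m(T)`. As `∂` is a derivation of the
exterior algebra, `e_{m₀} ∂m(T) = m(T) - ∂(e_{m₀} m(T))`, and `∂(e_{m₀} m(T))` vanishes in `A`
because `{m₀} ∪ T` is dependent (or `e_{m₀} m(T)` is already `0` when `m₀ ∈ T`).
-/

section Exterior

variable (K : Type*) [Field K] {α : Type*}

def extMonomial {n : ℕ} (f : Fin n → α) : ExteriorAlgebra K (α →₀ K) :=
  (List.ofFn fun i => extGen K (f i)).prod

variable {K}

lemma extMonomial_cons {n : ℕ} (x : α) (f : Fin n → α) :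
    extMonomial K (Fin.cons x f) = extGen K x * extMonomial K f := by
  simp [extMonomial, List.ofFn_succ]

lemma extMonomial_fin_zero (f : Fin 0 → α) : extMonomial K f = 1 := by
  simp [extMonomial]

lemma extMonomial_eq_zero_of_not_injective {n : ℕ} {f : Fin n → α}
    (hf : ¬ Function.Injective f) : extMonomial K f = 0 := by
  simp only [extMonomial, extGen, ← ExteriorAlgebra.ιMulti_apply]
  exact AlternatingMap.map_eq_zero_of_not_injective _ _
    fun h => hf fun a b hab => h (by simp only [hab])

lemma extBoundary_extGen_mul (s : α) (b : ExteriorAlgebra K (α →₀ K)) :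
    extBoundary K α (extGen K s * b) = b - extGen K s * extBoundary K α b := by
  simp [extBoundary, extGen, CliffordAlgebra.contractLeft_ι_mul]

lemma extBoundary_extMonomial {n : ℕ} (f : Fin (n + 1) → α) :
    extBoundary K α (extMonomial K f) =
      ∑ i : Fin (n + 1), (-1 : ℤ) ^ (i : ℕ) • extMonomial K (i.removeNth f) := by
  induction n with
  | zero =>
    cases f using Fin.consCases with
    | cons x g =>
      rw [extMonomial_cons, extBoundary_extGen_mul, extMonomial_fin_zero, extBoundary,
        CliffordAlgebra.contractLeft_one]
      simp [extMonomial_fin_zero]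
  | succ n ih =>
    cases f using Fin.consCases with
    | cons x g =>
      have hsucc : ∀ i : Fin (n + 1),
          i.succ.removeNth (Fin.cons x g : Fin (n + 2) → α) = Fin.cons x (i.removeNth g) :=
        Fin.cons_comp_succ_succAbove x g
      rw [extMonomial_cons, extBoundary_extGen_mul, ih, Fin.sum_univ_succ (n := n + 1)]
      simp only [hsucc, Fin.removeNth_zero, Fin.tail_cons, extMonomial_cons, Fin.val_zero,
        pow_zero, one_smul, Fin.val_succ, pow_succ, mul_neg_one, neg_smul, Finset.mul_sum,
        mul_smul_comm, Finset.sum_neg_distrib, sub_eq_add_neg]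

end Exterior

section OrlikSolomonRelations

variable {K : Type*} [Field K] {α : Type*} (Mat : Matroid α)

lemma osE_mul_self (s : α) : osE K Mat s * osE K Mat s = 0 := by
  rw [osE, ← map_mul, extGen, ExteriorAlgebra.ι_sq_zero, map_zero]

lemma mkRingHom_extMonomial {n : ℕ} (f : Fin n → α) :
    RingQuot.mkRingHom (osRel K Mat) (extMonomial K f) = osMonomial K Mat f := by
  simp [extMonomial, osMonomial, osE, map_list_prod, List.map_ofFn, Function.comp_def]

lemma mkRingHom_extBoundary_extMonomial {n : ℕ} (f : Fin (n + 1) → α) :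
    RingQuot.mkRingHom (osRel K Mat) (extBoundary K α (extMonomial K f)) =
      ∑ i : Fin (n + 1), (-1 : ℤ) ^ (i : ℕ) • osMonomial K Mat (i.removeNth f) := by
  simp [extBoundary_extMonomial, mkRingHom_extMonomial]

lemma mkRingHom_extBoundary_extMonomial_of_not_indep {n : ℕ} {f : Fin n → α}
    (hf : Function.Injective f) (hdep : ¬ Mat.Indep (Set.range f)) :
    RingQuot.mkRingHom (osRel K Mat) (extBoundary K α (extMonomial K f)) = 0 :=
  (RingQuot.mkRingHom_rel ⟨rfl, n, f, hf, hdep, rfl⟩).trans (map_zero _)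

variable {Mat}

lemma osE_mul_mkRingHom_extBoundary {n : ℕ} {h : Fin n → α} (hinj : Function.Injective h)
    (hind : Mat.Indep (Set.range h)) {x : α} (hx : x ∈ Mat.closure (Set.range h)) :
    osE K Mat x * RingQuot.mkRingHom (osRel K Mat) (extBoundary K α (extMonomial K h)) =
      osMonomial K Mat h := by
  have hcons : RingQuot.mkRingHom (osRel K Mat)
      (extBoundary K α (extMonomial K (Fin.cons x h))) = 0 := by
    by_cases hxh : x ∈ Set.range h
    · rw [extMonomial_eq_zero_of_not_injective fun hc => (Fin.cons_injective_iff.1 hc).1 hxh,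
        map_zero, map_zero]
    · refine mkRingHom_extBoundary_extMonomial_of_not_indep Mat
        (Fin.cons_injective_iff.2 ⟨hxh, hinj⟩) ?_
      rw [Fin.range_cons, hind.insert_indep_iff_of_notMem hxh]
      exact fun hx' => hx'.2 hx
  rw [extMonomial_cons, extBoundary_extGen_mul, map_sub, map_mul, sub_eq_zero,
    mkRingHom_extMonomial] at hcons
  exact hcons.symm

lemma osE_mul_osMonomial_of_mem_closure {n : ℕ} {h : Fin n → α}
    (hinj : Function.Injective h) (hind : Mat.Indep (Set.range h)) {x : α}
    (hx : x ∈ Mat.closure (Set.range h)) : osE K Mat x * osMonomial K Mat h = 0 := by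
  rw [← osE_mul_mkRingHom_extBoundary hinj hind hx, ← mul_assoc, osE_mul_self, zero_mul]

lemma osE_mul_sum_osMonomial_removeNth {n : ℕ} {h : Fin (n + 1) → α}
    (hinj : Function.Injective h) (hind : Mat.Indep (Set.range h)) {x : α}
    (hx : x ∈ Mat.closure (Set.range h)) :
    osE K Mat x * ∑ i : Fin (n + 1), (-1 : ℤ) ^ (i : ℕ) • osMonomial K Mat (i.removeNth h) =
      osMonomial K Mat h := by
  rw [← mkRingHom_extBoundary_extMonomial, osE_mul_mkRingHom_extBoundary hinj hind hx]

end OrlikSolomonRelations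

section PermCons

open Equiv

def permCons {n : ℕ} (k : Fin (n + 1)) (τ : Perm (Fin n)) : Perm (Fin (n + 1)) :=
  k.cycleRange.symm * Perm.decomposeFin.symm (0, τ)

lemma comp_permCons {β : Type*} {n : ℕ} (h : Fin (n + 1) → β) (k : Fin (n + 1))
    (τ : Perm (Fin n)) : h ∘ permCons k τ = Fin.cons (h k) (k.removeNth h ∘ τ) := by
  funext j
  cases j using Fin.cases <;>
    simp [permCons, Fin.cycleRange_symm_zero, Fin.cycleRange_symm_succ, Fin.removeNth]

lemma sign_permCons {n : ℕ} (k : Fin (n + 1)) (τ : Perm (Fin n)) :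
    Perm.sign (permCons k τ) = (-1) ^ (k : ℕ) * Perm.sign τ := by
  simp [permCons, Fin.sign_cycleRange, Perm.decomposeFin.symm_sign]

lemma bijective_permCons {n : ℕ} :
    Function.Bijective fun kτ : Fin (n + 1) × Perm (Fin n) => permCons kτ.1 kτ.2 := by
  refine (Fintype.bijective_iff_injective_and_card _).2
    ⟨?_, by simp [Fintype.card_perm, Nat.factorial_succ]⟩
  rintro ⟨k, τ⟩ ⟨k', τ'⟩ hkτ
  have h := congrArg (fun σ : Perm (Fin (n + 1)) => id ∘ ⇑σ) hkτ
  simp only [comp_permCons] at h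
  obtain ⟨rfl, hτ⟩ := Fin.cons_inj.1 h
  exact Prod.ext rfl (Equiv.ext fun i => Fin.succAbove_right_injective (congrFun hτ i))

lemma sum_perm_eq_sum_sum_permCons {M : Type*} [AddCommMonoid M] {n : ℕ}
    (f : Perm (Fin (n + 1)) → M) : ∑ σ, f σ = ∑ k, ∑ τ, f (permCons k τ) := by
  rw [← Fintype.sum_prod_type']
  exact (Fintype.sum_bijective _ bijective_permCons _ _ fun _ => rfl).symm

end PermCons

section Order

variable {α : Type*}

lemma exists_isLeast_of_nonempty [LinearOrder α] [Finite α] {s : Set α} (hs : s.Nonempty) :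
    ∃ a, IsLeast s a := by
  obtain ⟨a, ha, hmin⟩ := s.exists_min_image id s.toFinite hs
  exact ⟨a, ha, hmin⟩

lemma strictMono_fin_cons_iff [Preorder α] {n : ℕ} {a : α} {f : Fin n → α} :
    StrictMono (Fin.cons a f : Fin (n + 1) → α) ↔ (∀ i, a < f i) ∧ StrictMono f := by
  refine ⟨fun h => ⟨fun i => by simpa using h (Fin.succ_pos i),
    fun i j hij => by simpa using h (Fin.succ_lt_succ_iff.2 hij)⟩, fun ⟨ha, hf⟩ i j hij => ?_⟩
  cases i using Fin.cases <;> cases j using Fin.cases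
  · exact absurd hij (lt_irrefl 0)
  · simpa using ha _
  · exact absurd hij (Fin.not_lt_zero _)
  · simpa using hf (Fin.succ_lt_succ_iff.1 hij)

lemma image_fin_cons_setOf {n : ℕ} (x : α) (w : Fin n → α) {P : Fin (n + 1) → Prop}
    (h0 : ¬ P 0) : (Fin.cons x w : Fin (n + 1) → α) '' {j | P j} = w '' {j | P j.succ} := by
  ext b
  constructor
  · rintro ⟨j, hj, rfl⟩
    cases j using Fin.cases
    · exact absurd hj h0
    · exact ⟨_, hj, by simp⟩
  · rintro ⟨j, hj, rfl⟩
    exact ⟨j.succ, hj, by simp⟩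

end Order

section NBC

open Set

variable {α : Type*} {Mat : Matroid α}

lemma IsCircuitSet.isCircuit (hE : Mat.E = univ) {C : Set α} (hC : IsCircuitSet Mat C) :
    Mat.IsCircuit C :=
  Matroid.isCircuit_iff_forall_ssubset.2 ⟨⟨hC.1, hE ▸ subset_univ C⟩, hC.2⟩

variable [LinearOrder α]

lemma isNBC_empty [Mat.Loopless] (hE : Mat.E = univ) : IsNBC Mat ∅ := by
  rintro C hC ⟨a, -, -, hcirc⟩
  rw [subset_empty_iff.1 hC, insert_empty_eq] at hcirc
  exact hcirc.1 (Mat.isNonloop_of_loopless (hE ▸ mem_univ a)).indep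

lemma isNBC_insert_iff (hE : Mat.E = univ) {X Y R : Set α} {a : α} (hYX : Y ⊆ X)
    (hR : R ⊆ Mat.closure Y) (ha : IsLeast (Mat.closure X \ Mat.closure Y) a) :
    IsNBC Mat (insert a R) ↔ IsNBC Mat R := by
  refine ⟨fun h C hC => h C (hC.trans (subset_insert _ _)), fun hRnbc C hC hbroken => ?_⟩
  obtain ⟨b, hbC, hbmin, hcirc⟩ := hbroken
  by_cases haC : a ∈ C
  swap
  · exact hRnbc C ((subset_insert_iff_of_notMem haC).1 hC) ⟨b, hbC, hbmin, hcirc⟩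
  have hD := hcirc.isCircuit hE
  have hCa : C \ {a} ⊆ Mat.closure Y := fun c hc => hR ((hC hc.1).resolve_left hc.2)
  have hCX : C ⊆ Mat.closure X := fun c hc => by
    by_cases hca : c = a
    · exact hca ▸ ha.1.1
    · exact Mat.closure_subset_closure hYX (hCa ⟨hc, hca⟩)
  have hbX : b ∈ Mat.closure X := Mat.closure_subset_closure_of_subset_closure hCX
    (by simpa [hbC] using hD.subset_closure_sdiff_singleton b (mem_insert b C))
  have hbY : b ∈ Mat.closure Y := by
    by_contra hbY
    exact (ha.2 ⟨hbX, hbY⟩).not_gt (hbmin a haC)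
  have hDa : insert b C \ {a} ⊆ Mat.closure Y := by
    rintro c ⟨rfl | hc, hca⟩
    exacts [hbY, hCa ⟨hc, hca⟩]
  exact ha.1.2 (Mat.closure_subset_closure_of_subset_closure hDa
    (hD.subset_closure_sdiff_singleton a (mem_insert_of_mem b haC)))

end NBC

section Flags

open Set

variable {K : Type*} [Field K] {α : Type*} [Fintype α] [LinearOrder α] (Mat : Matroid α)

lemma isLeast_flagTuple {n : ℕ} (g : Fin n → α) (i : Fin n)
    (hne : (Mat.closure (g '' {j | i ≤ j}) \ Mat.closure (g '' {j | i < j})).Nonempty) :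
    IsLeast (Mat.closure (g '' {j | i ≤ j}) \ Mat.closure (g '' {j | i < j}))
      (flagTuple Mat g i) := by
  have hne' := (Finite.toFinset_nonempty (toFinite _)).2 hne
  unfold flagTuple
  rw [dif_pos hne']
  have hmin := Finset.isLeast_min' _ hne'
  rwa [Finite.coe_toFinset] at hmin

lemma range_flagTuple_subset_closure {n : ℕ} (g : Fin n → α) (hg : range g ⊆ Mat.E) :
    range (flagTuple Mat g) ⊆ Mat.closure (range g) := by
  rintro _ ⟨i, rfl⟩
  by_cases hne : (Mat.closure (g '' {j | i ≤ j}) \ Mat.closure (g '' {j | i < j})).Nonempty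
  · exact Mat.closure_subset_closure (image_subset_range _ _) (isLeast_flagTuple Mat g i hne).1.1
  · unfold flagTuple
    rw [dif_neg fun h => hne ((Finite.toFinset_nonempty _).1 h)]
    exact Mat.subset_closure _ hg ⟨i, rfl⟩

lemma flagTuple_cons_succ {n : ℕ} (x : α) (w : Fin n → α) (i : Fin n) :
    flagTuple Mat (Fin.cons x w) i.succ = flagTuple Mat w i := by
  simp only [flagTuple, image_fin_cons_setOf x w (not_le.2 (Fin.succ_pos i)),
    image_fin_cons_setOf x w (Fin.not_lt_zero i.succ), Fin.succ_le_succ_iff, Fin.succ_lt_succ_iff,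
    Fin.cons_succ]

lemma flagTuple_cons {n : ℕ} {x : α} {w : Fin n → α} {a : α}
    (ha : IsLeast (Mat.closure (insert x (range w)) \ Mat.closure (range w)) a) :
    flagTuple Mat (Fin.cons x w) = Fin.cons a (flagTuple Mat w) := by
  have hS : Mat.closure ((Fin.cons x w : Fin (n + 1) → α) '' {j | 0 ≤ j}) \
      Mat.closure ((Fin.cons x w : Fin (n + 1) → α) '' {j | 0 < j}) =
      Mat.closure (insert x (range w)) \ Mat.closure (range w) := by
    simp [image_fin_cons_setOf x w (lt_irrefl (0 : Fin (n + 1))), Fin.succ_pos, Fin.range_cons]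
  funext j
  cases j using Fin.cases
  · rw [Fin.cons_zero]
    exact (isLeast_flagTuple Mat _ 0 (hS ▸ ⟨a, ha.1⟩)).unique (hS ▸ ha)
  · rw [flagTuple_cons_succ, Fin.cons_succ]

variable (K)

def flagMonomialWithin (U : Set α) {n : ℕ} (g : Fin n → α) : OSAlgebra K Mat :=
  if range (flagTuple Mat g) ⊆ U then flagMonomial K Mat g else 0

variable {K Mat}

@[simp]
lemma flagMonomialWithin_univ {n : ℕ} (g : Fin n → α) :
    flagMonomialWithin K Mat univ g = flagMonomial K Mat g := by
  simp [flagMonomialWithin]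

lemma flagMonomialWithin_fin_zero [Mat.Loopless] (hE : Mat.E = univ) (U : Set α)
    (g : Fin 0 → α) : flagMonomialWithin K Mat U g = 1 := by
  simp [flagMonomialWithin, flagMonomial, isNBC_empty hE, osMonomial,
    Subsingleton.strictMono]

lemma flagMonomial_cons (hE : Mat.E = univ) {n : ℕ} {x : α} {w : Fin n → α} {a : α}
    (ha : IsLeast (Mat.closure (insert x (range w)) \ Mat.closure (range w)) a) :
    flagMonomial K Mat (Fin.cons x w) = osE K Mat a * flagMonomialWithin K Mat (Ioi a) w := by
  have hnbc := isNBC_insert_iff hE (subset_insert x (range w))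
    (range_flagTuple_subset_closure Mat w (hE ▸ subset_univ _)) ha
  simp only [flagMonomial, flagMonomialWithin, flagTuple_cons Mat ha, strictMono_fin_cons_iff,
    Fin.range_cons, hnbc, osMonomial, List.ofFn_succ, Fin.cons_zero, Fin.cons_succ,
    List.prod_cons, range_subset_iff, mem_Ioi]
  split_ifs <;> simp_all

lemma flagMonomialWithin_cons (hE : Mat.E = univ) {U : Set α} (hU : IsUpperSet U) {n : ℕ}
    {x : α} {w : Fin n → α} {a : α}
    (ha : IsLeast (Mat.closure (insert x (range w)) \ Mat.closure (range w)) a) :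
    flagMonomialWithin K Mat U (Fin.cons x w) =
      if a ∈ U then osE K Mat a * flagMonomialWithin K Mat (Ioi a) w else 0 := by
  rw [flagMonomialWithin, flagMonomial_cons hE ha, flagTuple_cons Mat ha, Fin.range_cons,
    insert_subset_iff]
  by_cases haU : a ∈ U
  · by_cases hIoi : range (flagTuple Mat w) ⊆ Ioi a
    · simp [haU, hIoi.trans fun y hy => hU hy.le haU]
    · simp [flagMonomialWithin, hIoi]
  · simp [haU]

end Flags

section Main

open Set Equiv

variable {K : Type*} [Field K] {α : Type*} [LinearOrder α] {Mat : Matroid α}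

lemma ite_osE_mul_ite_osMonomial {n : ℕ} {g : Fin n → α} (hginj : Function.Injective g)
    (hgind : Mat.Indep (range g)) {X : Set α} (hgX : Mat.closure (range g) ⊆ X) {m₀ a : α}
    (hm₀ : IsLeast X m₀) (ha : IsLeast (X \ Mat.closure (range g)) a) {U : Set α}
    (hU : IsUpperSet U) :
    (if a ∈ U then
        osE K Mat a * (if Mat.closure (range g) ⊆ Ioi a then osMonomial K Mat g else 0)
      else 0) =
      if X ⊆ U then osE K Mat m₀ * osMonomial K Mat g else 0 := by
  by_cases hm₀g : m₀ ∈ Mat.closure (range g)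
  · have hnot : ¬ Mat.closure (range g) ⊆ Ioi a :=
      fun hsub => (hsub hm₀g).not_ge (hm₀.2 ha.1.1)
    simp [hnot, osE_mul_osMonomial_of_mem_closure hginj hgind hm₀g]
  · obtain rfl : a = m₀ := ha.unique ⟨⟨hm₀.1, hm₀g⟩, fun b hb => hm₀.2 hb.1⟩
    have hgIoi : Mat.closure (range g) ⊆ Ioi a :=
      fun y hy => (hm₀.2 (hgX hy)).lt_of_ne fun hay => hm₀g (hay ▸ hy)
    have hXU : X ⊆ U ↔ a ∈ U := ⟨fun h => h hm₀.1, fun h _ hx => hU (hm₀.2 hx) h⟩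
    simp [hgIoi, hXU]

variable [Fintype α]

lemma sum_sign_smul_flagMonomialWithin_permCons (hE : Mat.E = univ) {p : ℕ}
    (ih : ∀ g : Fin p → α, Function.Injective g → Mat.Indep (range g) →
      ∀ U : Set α, IsUpperSet U →
        ∑ τ : Perm (Fin p), (Perm.sign τ : ℤ) • flagMonomialWithin K Mat U (g ∘ τ) =
          if Mat.closure (range g) ⊆ U then osMonomial K Mat g else 0)
    {h : Fin (p + 1) → α} (hinj : Function.Injective h) (hind : Mat.Indep (range h))
    {m₀ : α} (hm₀ : IsLeast (Mat.closure (range h)) m₀) {U : Set α} (hU : IsUpperSet U)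
    (k : Fin (p + 1)) :
    ∑ τ : Perm (Fin p), (Perm.sign (permCons k τ) : ℤ) •
        flagMonomialWithin K Mat U (h ∘ permCons k τ) =
      (-1 : ℤ) ^ (k : ℕ) • if Mat.closure (range h) ⊆ U then
        osE K Mat m₀ * osMonomial K Mat (k.removeNth h) else 0 := by
  set w := k.removeNth h
  have hcons : h ∘ permCons k 1 = Fin.cons (h k) w := comp_permCons h k 1
  have hrange : insert (h k) (range w) = range h := by
    rw [← Fin.range_cons, ← hcons, EquivLike.range_comp]
  obtain ⟨hkw, hwinj⟩ := Fin.cons_injective_iff.1 (hcons ▸ hinj.comp (permCons k 1).injective)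
  have hwind : Mat.Indep (range w) := hind.subset (hrange ▸ subset_insert _ _)
  -- the nbc-tuple of every flag `ℱ(h ∘ permCons k τ)` starts with the least element `a` of this set
  have hne : (Mat.closure (range h) \ Mat.closure (range w)).Nonempty :=
    ⟨h k, Mat.subset_closure _ hind.subset_ground ⟨k, rfl⟩,
      fun hk => ((hwind.insert_indep_iff_of_notMem hkw).1 (hrange ▸ hind)).2 hk⟩
  obtain ⟨a, ha⟩ := exists_isLeast_of_nonempty hne
  have haτ (τ : Perm (Fin p)) :
      IsLeast (Mat.closure (insert (h k) (range (w ∘ τ))) \ Mat.closure (range (w ∘ τ))) a := by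
    rwa [EquivLike.range_comp, hrange]
  have hτ (τ : Perm (Fin p)) : h ∘ permCons k τ = Fin.cons (h k) (w ∘ τ) := comp_permCons h k τ
  calc ∑ τ : Perm (Fin p), (Perm.sign (permCons k τ) : ℤ) •
          flagMonomialWithin K Mat U (h ∘ permCons k τ)
      = ∑ τ : Perm (Fin p), (-1 : ℤ) ^ (k : ℕ) • (Perm.sign τ : ℤ) •
          if a ∈ U then osE K Mat a * flagMonomialWithin K Mat (Ioi a) (w ∘ τ) else 0 := by
        refine Finset.sum_congr rfl fun τ _ => ?_
        rw [hτ, flagMonomialWithin_cons hE hU (haτ τ), sign_permCons, Units.val_mul,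
          mul_smul, Units.val_pow_eq_pow_val, Units.val_neg, Units.val_one]
    _ = (-1 : ℤ) ^ (k : ℕ) • if a ∈ U then osE K Mat a *
          ∑ τ : Perm (Fin p), (Perm.sign τ : ℤ) • flagMonomialWithin K Mat (Ioi a) (w ∘ τ)
          else 0 := by
        rw [← Finset.smul_sum]
        split_ifs
        · simp only [Finset.mul_sum, mul_smul_comm]
        · simp
    _ = _ := by
        rw [ih w hwinj hwind _ (isUpperSet_Ioi a), ite_osE_mul_ite_osMonomial hwinj hwind
          (Mat.closure_subset_closure (hrange ▸ subset_insert _ _)) hm₀ ha hU]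

theorem sum_sign_smul_flagMonomialWithin [Mat.Loopless] (hE : Mat.E = univ) {p : ℕ}
    (h : Fin p → α) (hinj : Function.Injective h) (hind : Mat.Indep (range h))
    (U : Set α) (hU : IsUpperSet U) :
    ∑ σ : Perm (Fin p), (Perm.sign σ : ℤ) • flagMonomialWithin K Mat U (h ∘ σ) =
      if Mat.closure (range h) ⊆ U then osMonomial K Mat h else 0 := by
  induction p generalizing U with
  | zero =>
    simp [flagMonomialWithin_fin_zero hE, osMonomial, Matroid.closure_empty]
  | succ p ih =>
    obtain ⟨m₀, hm₀⟩ := exists_isLeast_of_nonempty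
      ⟨h 0, Mat.subset_closure _ hind.subset_ground ⟨0, rfl⟩⟩
    rw [sum_perm_eq_sum_sum_permCons, ← osE_mul_sum_osMonomial_removeNth hinj hind hm₀.1]
    simp only [sum_sign_smul_flagMonomialWithin_permCons hE ih
      hinj hind hm₀ hU]
    split_ifs
    · simp only [Finset.mul_sum, mul_smul_comm]
    · simp

end Main

/-- in the Orlik–Solomon algebra of a simple matroid on a linearly
ordered ground set, for any independent tuple `T` taken in the induced
(increasing) order,
`m(T) = ∑_{σ ∈ Σ_p} sgn(σ) · m(ℱ(σT))`. -/
theorem osMonomial_eq_sum_flags (Mat : Matroid α) (hE : Mat.E = Set.univ)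
    (hsimple : ∀ s t : α, Mat.Indep {s, t})
    (p : ℕ) (T : Fin p → α) (hmono : StrictMono T)
    (hind : Mat.Indep (Set.range T)) :
    osMonomial K Mat T =
      ∑ σ : Equiv.Perm (Fin p),
        ((Equiv.Perm.sign σ : ℤ) • flagMonomial K Mat (T ∘ σ)) := by
  have : Mat.Loopless := Matroid.loopless_iff_forall_isNonloop.2 fun e _ =>
    Matroid.indep_singleton.1 (by simpa using hsimple e e)
  simpa using (sum_sign_smul_flagMonomialWithin hE T hmono.injective hind _ isUpperSet_univ).symm

end
end

section
/- In the integral cohomology ring A = H*(C_n(ℝ³)) = ℤ[e_{ij} : 1≤i<j≤n]/I, where I is generated by e_{ij}² and e_{ij}e_{ik} − e_{ij}e_{jk} + e_{ik}e_{jk} for i<j<k, the product π = ∏_{i=2}^{n} (ē_{1i})² in A ⊗ A equals (−2)^{n−1} m ⊗ m with m = ∏_{i=2}^{n} e_{1i}, and m ≠ 0; in particular π ≠ 0. -/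
/-!
Since `e_{1i}² = 0` and `A` is commutative, `ē_{1i}² = -2 · e_{1i} ⊗ e_{1i}`, and multiplying
over `i` gives `(-2)^{n-1} · m ⊗ m`. For nonvanishing, map `A` to the square-zero algebra
`ℤ[x_1, …, x_n]/(x_j²)` by `e_{ij} ↦ x_j`: the defining relations hold there. Doing this on
each tensor factor with two disjoint sets of variables sends `(-2)^{n-1} · m ⊗ m` to
`(-2)^{n-1}` times a squarefree monomial, which does not lie in the ideal spanned by squares.
-/

open MvPolynomial

/-- Index type for the generators `e_{ij}`, `1 ≤ i < j ≤ n`. -/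
abbrev PairIdx (n : ℕ) := {p : Fin n × Fin n // p.1 < p.2}

/-- The relations of `H^*(C_n(ℝ³); ℤ)`: the squares `e_{ij}²` and the three-term
relations `e_{ij} e_{ik} - e_{ij} e_{jk} + e_{ik} e_{jk}` for `i < j < k`. -/
def configRels (n : ℕ) : Set (MvPolynomial (PairIdx n) ℤ) :=
  {f | (∃ p : PairIdx n, f = X p ^ 2) ∨
    ∃ (i j k : Fin n) (hij : i < j) (hjk : j < k),
      f = X ⟨(i, j), hij⟩ * X ⟨(i, k), hij.trans hjk⟩
        - X ⟨(i, j), hij⟩ * X ⟨(j, k), hjk⟩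
        + X ⟨(i, k), hij.trans hjk⟩ * X ⟨(j, k), hjk⟩}

/-- The algebra `A = ℤ[e_{ij}]/I`, i.e. `H^*(C_n(ℝ³); ℤ)` (generators in degree 2,
hence commutative). -/
abbrev ConfigAlg (n : ℕ) := MvPolynomial (PairIdx n) ℤ ⧸ Ideal.span (configRels n)

/-- The generator `e_{ij}` in `ConfigAlg n`. -/
noncomputable def eGen {n : ℕ} (p : PairIdx n) : ConfigAlg n :=
  Ideal.Quotient.mk _ (X p)

/-- `e_{1i}` (with the convention `e_{11} = 1` for the dummy index), for `0 < n`. -/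
noncomputable def eOne (n : ℕ) (hn : 0 < n) (i : Fin n) : ConfigAlg n :=
  if h : (⟨0, hn⟩ : Fin n) < i then eGen ⟨(⟨0, hn⟩, i), h⟩ else 1

/-- The monomial `m = e_{12} e_{13} ⋯ e_{1n}`. -/
noncomputable def mMonomial (n : ℕ) (hn : 0 < n) : ConfigAlg n :=
  ∏ i ∈ Finset.univ.erase (⟨0, hn⟩ : Fin n), eOne n hn i

open scoped TensorProduct

/-- `ē_{1i} = 1 ⊗ e_{1i} - e_{1i} ⊗ 1` in `A ⊗ A` (no signs occur since the
generators have degree 2). -/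
noncomputable def barE (n : ℕ) (hn : 0 < n) (i : Fin n) :
    ConfigAlg n ⊗[ℤ] ConfigAlg n :=
  1 ⊗ₜ[ℤ] eOne n hn i - eOne n hn i ⊗ₜ[ℤ] 1

namespace MvPolynomial

variable {σ R : Type*} [CommRing R]

noncomputable def sqIdeal (σ R : Type*) [CommRing R] : Ideal (MvPolynomial σ R) :=
  Ideal.span (Set.range fun i => X i ^ 2)

theorem smul_prod_X_notMem_sqIdeal (t : Finset σ) {c : R} (hc : c ≠ 0) :
    c • ∏ i ∈ t, (X i : MvPolynomial σ R) ∉ sqIdeal σ R := by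
  classical
  have hspan : (Set.range fun i => (X i ^ 2 : MvPolynomial σ R)) =
      (fun s => monomial s (1 : R)) '' Set.range fun i => Finsupp.single i 2 := by
    rw [← Set.range_comp]
    congr 1
    funext i
    exact X_pow_eq_monomial
  have hprod : c • ∏ i ∈ t, (X i : MvPolynomial σ R) =
      monomial (Finsupp.indicator t fun _ _ => 1) c := by
    simpa [smul_monomial] using congrArg (c • ·) (prod_X_pow (R := R) (fun _ => 1) t)
  rw [sqIdeal, hspan, mem_ideal_span_monomial_image, hprod, support_monomial, if_neg hc]
  intro h
  obtain ⟨_, ⟨i, rfl⟩, hle⟩ := h _ (Finset.mem_singleton_self _)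
  have := hle i
  simp only [Finsupp.single_eq_same, Finsupp.indicator_apply] at this
  split_ifs at this <;> omega

theorem mk_sqIdeal_X_sq (i : σ) : Ideal.Quotient.mk (sqIdeal σ R) (X i) ^ 2 = 0 := by
  rw [← map_pow, Ideal.Quotient.eq_zero_iff_mem]
  exact Ideal.subset_span ⟨i, rfl⟩

end MvPolynomial

namespace Algebra.TensorProduct

variable {R A B : Type*} [CommRing R] [CommRing A] [CommRing B] [Algebra R A] [Algebra R B]

theorem prod_tmul_prod {ι : Type*} (t : Finset ι) (f : ι → A) (g : ι → B) :
    ∏ i ∈ t, f i ⊗ₜ[R] g i = (∏ i ∈ t, f i) ⊗ₜ[R] ∏ i ∈ t, g i := by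
  classical
  induction t using Finset.induction with
  | empty => simp [one_def]
  | insert _ _ hx ih => simp only [Finset.prod_insert hx, ih, tmul_mul_tmul]

theorem prod_smul_tmul {ι : Type*} (t : Finset ι) (c : R) (f : ι → A) (g : ι → B) :
    ∏ i ∈ t, c • (f i ⊗ₜ[R] g i) = c ^ t.card • ((∏ i ∈ t, f i) ⊗ₜ[R] ∏ i ∈ t, g i) := by
  rw [← Finset.smul_prod, prod_tmul_prod]

theorem one_tmul_sub_tmul_one_sq {e : A} (he : e ^ 2 = 0) :
    (1 ⊗ₜ[R] e - e ⊗ₜ[R] 1) ^ 2 = (-2 : R) • (e ⊗ₜ[R] e) := by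
  have hmul : (1 ⊗ₜ[R] e) * (e ⊗ₜ[R] 1) = e ⊗ₜ[R] e := by
    rw [tmul_mul_tmul, one_mul, mul_one]
  rw [sub_sq, tmul_pow, tmul_pow, one_pow, he, TensorProduct.tmul_zero, TensorProduct.zero_tmul,
    mul_assoc, hmul, zero_sub, add_zero, neg_smul, two_smul, two_mul]

end Algebra.TensorProduct

open Algebra.TensorProduct

section ConfigAlg

variable {n : ℕ}

theorem eOne_of_ne (hn : 0 < n) {i : Fin n} (hi : i ≠ ⟨0, hn⟩) :
    ∃ h : (⟨0, hn⟩ : Fin n) < i, eOne n hn i = eGen ⟨(⟨0, hn⟩, i), h⟩ :=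
  have h : (⟨0, hn⟩ : Fin n) < i := Fin.lt_def.2 (Nat.pos_of_ne_zero fun h0 => hi (Fin.ext h0))
  ⟨h, dif_pos h⟩

theorem eGen_sq (p : PairIdx n) : eGen p ^ 2 = 0 := by
  rw [eGen, ← map_pow, Ideal.Quotient.eq_zero_iff_mem]
  exact Ideal.subset_span (Or.inl ⟨p, rfl⟩)

theorem barE_sq (hn : 0 < n) {i : Fin n} (hi : i ≠ ⟨0, hn⟩) :
    barE n hn i ^ 2 = (-2 : ℤ) • (eOne n hn i ⊗ₜ[ℤ] eOne n hn i) := by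
  obtain ⟨_, he⟩ := eOne_of_ne hn hi
  exact one_tmul_sub_tmul_one_sq (he ▸ eGen_sq _)

theorem prod_barE_sq_eq (hn : 0 < n) :
    ∏ i ∈ Finset.univ.erase (⟨0, hn⟩ : Fin n), barE n hn i ^ 2 =
      (-2 : ℤ) ^ (n - 1) • (mMonomial n hn ⊗ₜ[ℤ] mMonomial n hn) := by
  rw [Finset.prod_congr rfl fun i hi => barE_sq hn (Finset.ne_of_mem_erase hi),
    prod_smul_tmul, Finset.card_erase_of_mem (Finset.mem_univ _),
    Finset.card_univ, Fintype.card_fin, mMonomial]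

/-- Well defined since the three-term relation becomes `y_j y_k - y_j y_k + y_k² = 0`. -/
noncomputable def configLift {S : Type*} [CommRing S] (y : Fin n → S) (hy : ∀ j, y j ^ 2 = 0) :
    ConfigAlg n →ₐ[ℤ] S :=
  Ideal.Quotient.liftₐ _ (MvPolynomial.aeval fun p => y p.1.2) fun a ha => by
    refine Submodule.span_induction ?_ (map_zero _)
      (fun _ _ _ _ h₁ h₂ => by rw [map_add, h₁, h₂, add_zero])
      (fun c _ _ h => by rw [smul_eq_mul, map_mul, h, mul_zero]) ha
    rintro g (⟨p, rfl⟩ | ⟨i, j, k, hij, hjk, rfl⟩)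
    · simp [hy]
    · simp only [map_add, map_sub, map_mul, MvPolynomial.aeval_X]
      linear_combination hy k

theorem configLift_eGen {S : Type*} [CommRing S] (y : Fin n → S) (hy : ∀ j, y j ^ 2 = 0)
    (p : PairIdx n) : configLift y hy (eGen p) = y p.1.2 :=
  aeval_X _ _

theorem configLift_mMonomial {S : Type*} [CommRing S] (y : Fin n → S) (hy : ∀ j, y j ^ 2 = 0)
    (hn : 0 < n) :
    configLift y hy (mMonomial n hn) = ∏ i ∈ Finset.univ.erase (⟨0, hn⟩ : Fin n), y i := by
  rw [mMonomial, map_prod]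
  refine Finset.prod_congr rfl fun i hi => ?_
  obtain ⟨_, he⟩ := eOne_of_ne hn (Finset.ne_of_mem_erase hi)
  rw [he, configLift_eGen]

theorem smul_mMonomial_tmul_ne_zero (hn : 0 < n) {c : ℤ} (hc : c ≠ 0) :
    c • (mMonomial n hn ⊗ₜ[ℤ] mMonomial n hn) ≠ 0 := by
  set F := Finset.univ.erase (⟨0, hn⟩ : Fin n)
  let y (s : Fin n → Fin n ⊕ Fin n) (j : Fin n) := Ideal.Quotient.mk (sqIdeal _ ℤ) (X (s j))
  let φ := productMap (configLift (y Sum.inl) fun _ => mk_sqIdeal_X_sq _)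
    (configLift (y Sum.inr) fun _ => mk_sqIdeal_X_sq _)
  have hφ : φ (c • (mMonomial n hn ⊗ₜ[ℤ] mMonomial n hn)) =
      Ideal.Quotient.mk _ (c • ∏ i ∈ F.disjSum F, X i) := by
    simp [φ, y, F, configLift_mMonomial, Finset.prod_disjSum]
  intro h
  rw [h, map_zero, eq_comm, Ideal.Quotient.eq_zero_iff_mem] at hφ
  exact smul_prod_X_notMem_sqIdeal _ hc hφ

end ConfigAlg

/-- in `A ⊗ A`, the product `π = ∏_{i=2}^{n} (ē_{1i})²` equals
`(-2)^{n-1} · m ⊗ m` with `m = ∏_{i=2}^{n} e_{1i}`; moreover `m ≠ 0`, and in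
particular `π ≠ 0`. -/
theorem prod_barE_sq (n : ℕ) (hn : 2 ≤ n) :
    (∏ i ∈ Finset.univ.erase (⟨0, by omega⟩ : Fin n), (barE n (by omega) i) ^ 2)
        = ((-2 : ℤ) ^ (n - 1)) •
          (mMonomial n (by omega) ⊗ₜ[ℤ] mMonomial n (by omega)) ∧
      mMonomial n (by omega) ≠ 0 ∧
      (∏ i ∈ Finset.univ.erase (⟨0, by omega⟩ : Fin n), (barE n (by omega) i) ^ 2)
        ≠ 0 := by
  have hn₀ : 0 < n := by omega
  have hπ := prod_barE_sq_eq hn₀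
  have hne := smul_mMonomial_tmul_ne_zero hn₀ (pow_ne_zero (n - 1) (by norm_num : (-2 : ℤ) ≠ 0))
  refine ⟨hπ, fun hm => hne ?_, hπ ▸ hne⟩
  rw [hm, TensorProduct.zero_tmul, smul_zero]
end
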